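/- arXiv:1601.03853 — 3 statements merged into one kernel-verified Lean document; each statement's English description precedes it below -/
import Mathlib

section
/- Let A₁ = [[0,−1,0],[−1,0,0],[0,0,0]], A₂ = [[0,0,−1],[0,0,0],[−1,0,0]], ν ∈ ℝ² with |ν| = 1, and A_ν = ν₁A₁ + ν₂A₂. A matrix M ∈ M₃(ℝ) satisfies the four algebraic conditions (i) M = Mᵀ, (ii) M is positive semidefinite, (iii) ker A_ν ⊆ ker M, (iv) ℝ³ = ker(A_ν − M) + ker(A_ν + M), if and only if there exists λ > 0 such that M = [[λ⁻¹,0,0],[0,λν₁²,λν₁ν₂],[0,λν₁ν₂,λν₂²]]. -/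
/-!
All four conditions are preserved by a congruence `A ↦ Uᵀ A U`, `M ↦ Uᵀ M U` with `U`
invertible, and the rotation `Q` fixing `e₀` and sending `e₁` to `(0, ν₁, ν₂)` conjugates
`A₁` to `A_ν`; so it suffices to treat `A_ν = A₁`. There `e₂ ∈ ker A₁ ⊆ ker M` and symmetry
reduce `M` to a positive semidefinite `2 × 2` block `P`, and `ℝ² = ker (J - P) + ker (J + P)`
with `J = !![0, -1; -1, 0]`. If `J ∓ P` were invertible, the other kernel would be everything,
i.e. `P = ∓J`, which is indefinite. Hence `det (J - P) = det (J + P) = 0`, which forces `P`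
to be diagonal with determinant `1`.
-/

open Matrix

def A1 : Matrix (Fin 3) (Fin 3) ℝ := !![0, -1, 0; -1, 0, 0; 0, 0, 0]

def A2 : Matrix (Fin 3) (Fin 3) ℝ := !![0, 0, -1; 0, 0, 0; -1, 0, 0]

namespace Matrix

variable {n : Type*} [Fintype n]

def IsAdmissible (A M : Matrix n n ℝ) : Prop :=
  M.IsSymm ∧ M.PosSemidef ∧ (∀ x, A *ᵥ x = 0 → M *ᵥ x = 0) ∧
    ∀ x, ∃ y z, (A - M) *ᵥ y = 0 ∧ (A + M) *ᵥ z = 0 ∧ x = y + z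

theorem IsAdmissible.transpose_mul_mul_same [DecidableEq n] {A M : Matrix n n ℝ}
    (h : IsAdmissible A M) {U : Matrix n n ℝ} (hU : IsUnit U.det) :
    IsAdmissible (Uᵀ * A * U) (Uᵀ * M * U) := by
  obtain ⟨hsymm, hpsd, hker, hsum⟩ := h
  have hUt : Function.Injective (Uᵀ *ᵥ ·) :=
    mulVec_injective_of_isUnit ((isUnit_iff_isUnit_det _).mpr (by rwa [det_transpose]))
  refine ⟨?_, ?_, fun x hx ↦ ?_, fun x ↦ ?_⟩
  · simp only [IsSymm, transpose_mul, transpose_transpose, hsymm.eq, Matrix.mul_assoc]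
  · simpa using hpsd.conjTranspose_mul_mul_same U
  · have hAx : A *ᵥ (U *ᵥ x) = 0 :=
      hUt (by simpa only [mulVec_mulVec, mulVec_zero, Matrix.mul_assoc] using hx)
    simp only [← mulVec_mulVec, hker _ hAx, mulVec_zero]
  · have hconj (B : Matrix n n ℝ) (v : n → ℝ) :
        (Uᵀ * B * U) *ᵥ (U⁻¹ *ᵥ v) = Uᵀ *ᵥ (B *ᵥ v) := by
      rw [mulVec_mulVec, Matrix.mul_assoc, mul_nonsing_inv _ hU, Matrix.mul_one, mulVec_mulVec]
    obtain ⟨y, z, hy, hz, hyz⟩ := hsum (U *ᵥ x)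
    refine ⟨U⁻¹ *ᵥ y, U⁻¹ *ᵥ z, ?_, ?_, ?_⟩
    · rw [← Matrix.sub_mul, ← Matrix.mul_sub, hconj, hy, mulVec_zero]
    · rw [← Matrix.add_mul, ← Matrix.mul_add, hconj, hz, mulVec_zero]
    · rw [← mulVec_add, ← hyz, mulVec_mulVec, nonsing_inv_mul _ hU, one_mulVec]

theorem mul_mul_mul_mul_cancel [DecidableEq n] {R : Type*} [Semiring R] {U V : Matrix n n R}
    (h : V * U = 1) (X : Matrix n n R) : V * (U * X * V) * U = X := by
  rw [← Matrix.mul_assoc, ← Matrix.mul_assoc, h, Matrix.one_mul, Matrix.mul_assoc, h,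
    Matrix.mul_one]

theorem isAdmissible_mul_mul_transpose_iff [DecidableEq n] {A M U : Matrix n n ℝ}
    (hU : Uᵀ * U = 1) :
    IsAdmissible (U * A * Uᵀ) M ↔ IsAdmissible A (Uᵀ * M * U) := by
  have hdet : IsUnit U.det := isUnit_det_of_left_inverse hU
  constructor
  · intro h
    simpa only [mul_mul_mul_mul_cancel hU] using h.transpose_mul_mul_same hdet
  · intro h
    simpa only [transpose_transpose, mul_mul_mul_mul_cancel (mul_eq_one_comm.mp hU)] using
      h.transpose_mul_mul_same (U := Uᵀ) (by rwa [det_transpose])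

theorem eq_zero_of_forall_eq_add_of_det_ne_zero [DecidableEq n] {K : Type*} [Field K]
    {B C : Matrix n n K} (hB : B.det ≠ 0)
    (h : ∀ x, ∃ y z, B *ᵥ y = 0 ∧ C *ᵥ z = 0 ∧ x = y + z) : C = 0 := by
  refine mulVec_injective (funext fun x ↦ ?_)
  obtain ⟨y, z, hy, hz, rfl⟩ := h x
  rw [eq_zero_of_mulVec_eq_zero hB hy, zero_add, hz, zero_mulVec]

section LastColumnZero

variable {R : Type*} [NonUnitalNonAssocSemiring R] {m : ℕ}

theorem submatrix_castSucc_mulVec {B : Matrix (Fin (m + 1)) (Fin (m + 1)) R}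
    (hB : ∀ i, B i (Fin.last m) = 0) (v : Fin (m + 1) → R) :
    B.submatrix Fin.castSucc Fin.castSucc *ᵥ (v ∘ Fin.castSucc) = (B *ᵥ v) ∘ Fin.castSucc := by
  ext i
  simp [mulVec, dotProduct, Fin.sum_univ_castSucc, hB]

theorem forall_eq_add_submatrix_castSucc {B C : Matrix (Fin (m + 1)) (Fin (m + 1)) R}
    (hB : ∀ i, B i (Fin.last m) = 0) (hC : ∀ i, C i (Fin.last m) = 0)
    (h : ∀ x, ∃ y z, B *ᵥ y = 0 ∧ C *ᵥ z = 0 ∧ x = y + z) (x : Fin m → R) :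
    ∃ y z, B.submatrix Fin.castSucc Fin.castSucc *ᵥ y = 0 ∧
      C.submatrix Fin.castSucc Fin.castSucc *ᵥ z = 0 ∧ x = y + z := by
  obtain ⟨y, z, hy, hz, hyz⟩ := h (Fin.snoc x 0)
  refine ⟨y ∘ Fin.castSucc, z ∘ Fin.castSucc, ?_, ?_, funext fun i ↦ ?_⟩
  · rw [submatrix_castSucc_mulVec hB, hy]; rfl
  · rw [submatrix_castSucc_mulVec hC, hz]; rfl
  · simpa using congrFun hyz i.castSucc

end LastColumnZero

theorem exists_eq_diagonal_of_forall_eq_add {P : Matrix (Fin 2) (Fin 2) ℝ} (hP : P.PosSemidef)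
    (h : ∀ x, ∃ y z, (!![0, -1; -1, 0] - P) *ᵥ y = 0 ∧ (!![0, -1; -1, 0] + P) *ᵥ z = 0 ∧
      x = y + z) :
    ∃ lam > 0, P = diagonal ![lam⁻¹, lam] := by
  have hsymm : P 1 0 = P 0 1 := hP.1.apply 0 1
  have hdet₁ : (!![0, -1; -1, 0] - P).det = 0 := by
    by_contra hdet
    have hJ := hP.dotProduct_mulVec_nonneg ![1, -1]
    rw [← neg_eq_of_add_eq_zero_right (eq_zero_of_forall_eq_add_of_det_ne_zero hdet h)] at hJ
    norm_num [mulVec, dotProduct, Fin.sum_univ_two] at hJ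
  have hdet₂ : (!![0, -1; -1, 0] + P).det = 0 := by
    by_contra hdet
    have hJP : !![0, -1; -1, 0] - P = 0 := eq_zero_of_forall_eq_add_of_det_ne_zero hdet fun x ↦ by
      obtain ⟨y, z, hy, hz, hyz⟩ := h x
      exact ⟨z, y, hz, hy, hyz.trans (add_comm y z)⟩
    have hJ := hP.dotProduct_mulVec_nonneg ![1, 1]
    rw [← sub_eq_zero.mp hJP] at hJ
    norm_num [mulVec, dotProduct, Fin.sum_univ_two] at hJ
  simp only [det_fin_two, sub_apply, add_apply, of_apply, cons_val', cons_val_zero, cons_val_one,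
    empty_val', cons_val_fin_one, hsymm] at hdet₁ hdet₂
  have hq : P 0 1 = 0 := by linear_combination (hdet₂ - hdet₁) / 4
  have hpr : P 0 0 * P 1 1 = 1 := by linear_combination hdet₂ + (P 0 1 - 2) * hq
  have hr : 0 < P 1 1 := pos_of_mul_pos_right (hpr ▸ one_pos) hP.diag_nonneg
  refine ⟨P 1 1, hr, ?_⟩
  ext i j
  fin_cases i <;> fin_cases j <;> simp [hq, hsymm, eq_inv_of_mul_eq_one_left hpr]

end Matrix

theorem A1_mulVec (x : Fin 3 → ℝ) : A1 *ᵥ x = ![-x 1, -x 0, 0] := by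
  ext i
  fin_cases i <;> simp [A1, mulVec, dotProduct, Fin.sum_univ_three]

theorem A1_submatrix_castSucc : A1.submatrix Fin.castSucc Fin.castSucc = !![0, -1; -1, 0] := by
  ext i j
  fin_cases i <;> fin_cases j <;> rfl

theorem exists_eq_diagonal_of_isAdmissible_A1 {M : Matrix (Fin 3) (Fin 3) ℝ}
    (h : IsAdmissible A1 M) : ∃ lam > 0, M = diagonal ![lam⁻¹, lam, 0] := by
  obtain ⟨hsymm, hpsd, hker, hsum⟩ := h
  have hA1col (i : Fin 3) : A1 i 2 = 0 := by fin_cases i <;> rfl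
  have hcol (i : Fin 3) : M i 2 = 0 := by
    have hA1 : A1 *ᵥ Pi.single 2 1 = 0 := by ext; simp [hA1col]
    simpa using congrFun (hker _ hA1) i
  have hrow (j : Fin 3) : M 2 j = 0 := hsymm.apply j 2 ▸ hcol j
  have hsum₂ := forall_eq_add_submatrix_castSucc (B := A1 - M) (C := A1 + M)
    (by simp [hA1col, hcol]) (by simp [hA1col, hcol]) hsum
  simp only [submatrix_sub, submatrix_add, Pi.sub_apply, Pi.add_apply] at hsum₂
  rw [A1_submatrix_castSucc] at hsum₂
  obtain ⟨lam, hlam, hP⟩ := exists_eq_diagonal_of_forall_eq_add (hpsd.submatrix Fin.castSucc) hsum₂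
  have h00 : M 0 0 = lam⁻¹ := by simpa using congr_fun₂ hP 0 0
  have h01 : M 0 1 = 0 := by simpa using congr_fun₂ hP 0 1
  have h10 : M 1 0 = 0 := by simpa using congr_fun₂ hP 1 0
  have h11 : M 1 1 = lam := by simpa using congr_fun₂ hP 1 1
  refine ⟨lam, hlam, ?_⟩
  ext i j
  fin_cases i <;> fin_cases j <;> simp [hcol, hrow, h00, h01, h10, h11]

theorem isAdmissible_A1_diagonal {lam : ℝ} (hlam : 0 < lam) :
    IsAdmissible A1 (diagonal ![lam⁻¹, lam, 0]) := by
  refine ⟨isSymm_diagonal _, ?_, fun x hx ↦ ?_, fun x ↦ ?_⟩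
  · simp [Fin.forall_fin_succ, hlam.le]
  · have h0 : x 1 = 0 := by simpa [A1_mulVec] using congrFun hx 0
    have h1 : x 0 = 0 := by simpa [A1_mulVec] using congrFun hx 1
    ext i
    fin_cases i <;> simp [mulVec_diagonal, h0, h1]
  · set a := (lam⁻¹ * x 0 - x 1) / 2
    set b := (lam⁻¹ * x 0 + x 1) / 2
    refine ⟨![lam * a, -a, x 2], ![lam * b, b, 0], ?_, ?_, ?_⟩
    · ext i
      fin_cases i <;> simp [sub_mulVec, A1_mulVec, mulVec_diagonal, hlam.ne']
    · ext i
      fin_cases i <;> simp [add_mulVec, A1_mulVec, mulVec_diagonal, hlam.ne']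
    · ext i
      fin_cases i <;> simp [a, b] <;> field_simp <;> ring

theorem stmt_12 (ν₁ ν₂ : ℝ) (hν : ν₁ ^ 2 + ν₂ ^ 2 = 1)
    (M : Matrix (Fin 3) (Fin 3) ℝ) :
    (M.IsSymm ∧ M.PosSemidef ∧
      (∀ x : Fin 3 → ℝ, (ν₁ • A1 + ν₂ • A2).mulVec x = 0 → M.mulVec x = 0) ∧
      (∀ x : Fin 3 → ℝ, ∃ y z : Fin 3 → ℝ,
        ((ν₁ • A1 + ν₂ • A2) - M).mulVec y = 0 ∧
        ((ν₁ • A1 + ν₂ • A2) + M).mulVec z = 0 ∧ x = y + z))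
    ↔ ∃ lam : ℝ, 0 < lam ∧
        M = !![lam⁻¹, 0, 0; 0, lam * ν₁ ^ 2, lam * ν₁ * ν₂;
               0, lam * ν₁ * ν₂, lam * ν₂ ^ 2] := by
  set Q : Matrix (Fin 3) (Fin 3) ℝ := !![1, 0, 0; 0, ν₁, -ν₂; 0, ν₂, ν₁]
  have hQ : Qᵀ * Q = 1 := by
    ext i j
    fin_cases i <;> fin_cases j <;> simp [Q, mul_apply, Fin.sum_univ_three] <;> linarith
  have hA : Q * A1 * Qᵀ = ν₁ • A1 + ν₂ • A2 := by
    ext i j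
    fin_cases i <;> fin_cases j <;> simp [Q, A1, A2, mul_apply, Fin.sum_univ_three]
  have hD (lam : ℝ) : Q * diagonal ![lam⁻¹, lam, 0] * Qᵀ =
      !![lam⁻¹, 0, 0; 0, lam * ν₁ ^ 2, lam * ν₁ * ν₂; 0, lam * ν₁ * ν₂, lam * ν₂ ^ 2] := by
    ext i j
    simp only [mul_apply, Fin.sum_univ_three, diagonal_apply]
    fin_cases i <;> fin_cases j <;> simp [Q, -mul_eq_mul_left_iff, -mul_eq_mul_right_iff] <;> ring
  change IsAdmissible _ M ↔ _
  rw [← hA, isAdmissible_mul_mul_transpose_iff hQ]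
  refine ⟨fun h ↦ ?_, fun ⟨lam, hlam, hM⟩ ↦ ?_⟩
  · obtain ⟨lam, hlam, hM⟩ := exists_eq_diagonal_of_isAdmissible_A1 h
    refine ⟨lam, hlam, ?_⟩
    rw [← hD, ← hM, mul_mul_mul_mul_cancel (mul_eq_one_comm.mp hQ)]
  · rw [hM, ← hD, mul_mul_mul_mul_cancel hQ]
    exact isAdmissible_A1_diagonal hlam
end

section
/- Let A₁ = [[0,−1,0],[−1,0,0],[0,0,0]], A₂ = [[0,0,−1],[0,0,0],[−1,0,0]], ν a unit vector of ℝ², A_ν = ν₁A₁ + ν₂A₂, λ > 0, and M = [[λ⁻¹,0,0],[0,λν₁²,λν₁ν₂],[0,λν₁ν₂,λν₂²]]. Then both ker(A_ν − M) and ker(A_ν + M) are 2-dimensional subspaces of ℝ³, and ker(A_ν − M) + ker(A_ν + M) = ℝ³. -/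
/-! Both `A_ν - M` and `A_ν + M` are rank-one symmetric matrices, `∓λ⁻¹ u uᵀ` with
`u = (1, ±λν₁, ±λν₂)`, so their kernels are the hyperplanes `u^⊥`. Two hyperplanes span the
whole space as soon as they differ, and `(λ, ν₁, ν₂)` lies on the second one but not on the
first since `ν₁² + ν₂² = 1`. -/

open Matrix

section RankOne

variable {K n : Type*} [Field K] [Fintype n]

theorem dotProductBilin_ne_zero {u : n → K} (hu : u ≠ 0) : dotProductBilin K K u ≠ 0 :=
  fun h => hu <| dotProduct_eq_zero u fun w => LinearMap.congr_fun h w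

theorem ker_mulVecLin_smul_vecMulVec {c : K} (hc : c ≠ 0) {u : n → K} (hu : u ≠ 0)
    (v : n → K) :
    LinearMap.ker (c • vecMulVec u v).mulVecLin = LinearMap.ker (dotProductBilin K K v) := by
  ext x
  simp [vecMulVec_mulVec, hc, hu]

theorem finrank_ker_dotProductBilin_add_one {u : n → K} (hu : u ≠ 0) :
    Module.finrank K (LinearMap.ker (dotProductBilin K K u)) + 1 = Fintype.card n := by
  rw [Module.Dual.finrank_ker_add_one_of_ne_zero (dotProductBilin_ne_zero hu),
    Module.finrank_fintype_fun_eq_card]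

theorem isCoatom_ker_dotProductBilin {u : n → K} (hu : u ≠ 0) :
    IsCoatom (LinearMap.ker (dotProductBilin K K u)) :=
  LinearMap.isCoatom_ker_of_surjective (LinearMap.surjective (dotProductBilin_ne_zero hu))

theorem ker_dotProductBilin_sup_eq_top {u v y : n → K} (hu : u ≠ 0) (hv : v ≠ 0)
    (huy : u ⬝ᵥ y ≠ 0) (hvy : v ⬝ᵥ y = 0) :
    LinearMap.ker (dotProductBilin K K u) ⊔ LinearMap.ker (dotProductBilin K K v) = ⊤ := by
  refine (isCoatom_ker_dotProductBilin hu).sup_eq_top_of_ne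
    (isCoatom_ker_dotProductBilin hv) fun h => huy ?_
  have hy : y ∈ LinearMap.ker (dotProductBilin K K v) := hvy
  rwa [← h] at hy

end RankOne

theorem smul_A1_add_smul_A2_sub_eq (ν₁ ν₂ : ℝ) {lam : ℝ} (hlam : lam ≠ 0) :
    (ν₁ • A1 + ν₂ • A2) - !![lam⁻¹, 0, 0; 0, lam * ν₁ ^ 2, lam * ν₁ * ν₂;
      0, lam * ν₁ * ν₂, lam * ν₂ ^ 2] =
    (-lam⁻¹) • vecMulVec ![1, lam * ν₁, lam * ν₂] ![1, lam * ν₁, lam * ν₂] := by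
  ext i j
  fin_cases i <;> fin_cases j <;> simp [A1, A2, vecMulVec] <;> field_simp

theorem smul_A1_add_smul_A2_add_eq (ν₁ ν₂ : ℝ) {lam : ℝ} (hlam : lam ≠ 0) :
    (ν₁ • A1 + ν₂ • A2) + !![lam⁻¹, 0, 0; 0, lam * ν₁ ^ 2, lam * ν₁ * ν₂;
      0, lam * ν₁ * ν₂, lam * ν₂ ^ 2] =
    lam⁻¹ • vecMulVec ![1, -(lam * ν₁), -(lam * ν₂)] ![1, -(lam * ν₁), -(lam * ν₂)] := by
  ext i j
  fin_cases i <;> fin_cases j <;> simp [A1, A2, vecMulVec] <;> field_simp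

theorem stmt_13 (ν₁ ν₂ : ℝ) (hν : ν₁ ^ 2 + ν₂ ^ 2 = 1) (lam : ℝ) (hlam : 0 < lam)
    (M : Matrix (Fin 3) (Fin 3) ℝ)
    (hM : M = !![lam⁻¹, 0, 0; 0, lam * ν₁ ^ 2, lam * ν₁ * ν₂;
                 0, lam * ν₁ * ν₂, lam * ν₂ ^ 2]) :
    Module.finrank ℝ (LinearMap.ker ((ν₁ • A1 + ν₂ • A2) - M).mulVecLin) = 2 ∧
    Module.finrank ℝ (LinearMap.ker ((ν₁ • A1 + ν₂ • A2) + M).mulVecLin) = 2 ∧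
    LinearMap.ker ((ν₁ • A1 + ν₂ • A2) - M).mulVecLin ⊔
      LinearMap.ker ((ν₁ • A1 + ν₂ • A2) + M).mulVecLin = ⊤ := by
  have hl : lam ≠ 0 := hlam.ne'
  have ne_zero (a b : ℝ) : ![1, a, b] ≠ 0 := fun h => one_ne_zero (congr_fun h 0)
  subst hM
  rw [smul_A1_add_smul_A2_sub_eq ν₁ ν₂ hl, smul_A1_add_smul_A2_add_eq ν₁ ν₂ hl,
    ker_mulVecLin_smul_vecMulVec (neg_ne_zero.2 (inv_ne_zero hl)) (ne_zero _ _),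
    ker_mulVecLin_smul_vecMulVec (inv_ne_zero hl) (ne_zero _ _)]
  have finrank_eq (a b : ℝ) :
      Module.finrank ℝ (LinearMap.ker (dotProductBilin ℝ ℝ ![1, a, b])) = 2 := by
    simpa using finrank_ker_dotProductBilin_add_one (ne_zero a b)
  have dot_pos : ![1, lam * ν₁, lam * ν₂] ⬝ᵥ ![lam, ν₁, ν₂] = 2 * lam := by
    simp only [dotProduct_cons, head_cons, tail_cons, dotProduct_of_isEmpty]
    linear_combination lam * hν
  have dot_neg : ![1, -(lam * ν₁), -(lam * ν₂)] ⬝ᵥ ![lam, ν₁, ν₂] = 0 := by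
    simp only [dotProduct_cons, head_cons, tail_cons, dotProduct_of_isEmpty]
    linear_combination -lam * hν
  exact ⟨finrank_eq _ _, finrank_eq _ _, ker_dotProductBilin_sup_eq_top (ne_zero _ _)
    (ne_zero _ _) (dot_pos ▸ by positivity) dot_neg⟩
end

section
/- Let n ≥ 1, ν ∈ ℝ^n a unit vector, λ > 0. Set A_ν = Σᵢ νᵢ Aᵢ with Aᵢ = −2e₁ ⊙ e_{i+1} ∈ M_{n+1}(ℝ), and M = λ⁻¹ e₁⊗e₁ + λ Σ_{i,j} νᵢνⱼ e_{i+1} ⊙ e_{j+1}. Then ℝ^{n+1} decomposes as the direct sum ker A_ν ⊕ (ker(A_ν − M) ∩ im A_ν) ⊕ (ker(A_ν + M) ∩ im A_ν), and for κ = (k, τ) ∈ ℝ × ℝ^n the three components of κ are κ⁰ = (0, τ − (τ·ν)ν), κ⁻ = ((k − λτ·ν)/2, ((τ·ν)/2 − k/(2λ))ν), κ⁺ = ((k + λτ·ν)/2, ((τ·ν)/2 + k/(2λ))ν). -/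
open Matrix

/-- Symmetric tensor product of two vectors, as a matrix: `a ⊙ b = (a ⊗ b + b ⊗ a)/2`. -/
noncomputable def symOuter {m : Type*} [Fintype m] (a b : m → ℝ) : Matrix m m ℝ :=
  (2 : ℝ)⁻¹ • (vecMulVec a b + vecMulVec b a)

/-- The canonical basis vector `e j` of `ℝ^{n+1}`. -/
noncomputable def e {n : ℕ} (j : Fin (n + 1)) : Fin (n + 1) → ℝ := Pi.single j 1

/-- The matrices `Aᵢ = -2 e₁ ⊙ e_{i+1}`. -/
noncomputable def A {n : ℕ} (i : Fin n) : Matrix (Fin (n + 1)) (Fin (n + 1)) ℝ :=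
  (-2 : ℝ) • symOuter (e 0) (e i.succ)

/-- The boundary matrix `A_ν = Σᵢ νᵢ Aᵢ`. -/
noncomputable def Anu {n : ℕ} (ν : Fin n → ℝ) : Matrix (Fin (n + 1)) (Fin (n + 1)) ℝ :=
  ∑ i : Fin n, ν i • A i

/-- The matrix `M = λ⁻¹ e₁ ⊗ e₁ + λ Σᵢⱼ νᵢνⱼ e_{i+1} ⊙ e_{j+1}`. -/
noncomputable def Mmat {n : ℕ} (lam : ℝ) (ν : Fin n → ℝ) :
    Matrix (Fin (n + 1)) (Fin (n + 1)) ℝ :=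
  lam⁻¹ • vecMulVec (e 0) (e 0) +
    lam • ∑ i : Fin n, ∑ j : Fin n, (ν i * ν j) • symOuter (e i.succ) (e j.succ)

/-!
With `u = (0, ν)` one has `A_ν = -(e₁ ⊗ u + u ⊗ e₁)` and `M = λ⁻¹ e₁ ⊗ e₁ + λ u ⊗ u`. Since `u ⊥ e₁`
and `|u| = 1`, the image of `A_ν` is the plane spanned by `e₁` and `u`, on which
`A_ν (a e₁ + c u) = -c e₁ - a u` and `M (a e₁ + c u) = λ⁻¹ a e₁ + λ c u`; membership of the
explicit components thus reduces to scalar identities. For the directness of the sum only the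
injectivity of `M` on `im A_ν` matters: if `x + y + z = 0`, applying `A_ν` gives `M (y - z) = 0`,
so `y = z`, and then `M y = A_ν y = -M y`.
-/

theorem LinearMap.eq_zero_of_mem_ker_add_mem_ker_sub_add_mem_ker_add {R V : Type*} [Ring R]
    [AddCommGroup V] [Module R V] [IsAddTorsionFree V] {f g : V →ₗ[R] V}
    (hfg : Disjoint (LinearMap.range f) (LinearMap.ker g)) {x y z : V}
    (hx : x ∈ LinearMap.ker f) (hy : y ∈ LinearMap.ker (f - g) ⊓ LinearMap.range f)
    (hz : z ∈ LinearMap.ker (f + g) ⊓ LinearMap.range f) (hxyz : x + y + z = 0) :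
    x = 0 ∧ y = 0 ∧ z = 0 := by
  obtain ⟨hy, hy_range⟩ := Submodule.mem_inf.mp hy
  obtain ⟨hz, hz_range⟩ := Submodule.mem_inf.mp hz
  rw [LinearMap.mem_ker] at hx hy hz
  have hgy : g y = f y := (sub_eq_zero.mp hy).symm
  have hgz : g z = -f z := eq_neg_of_add_eq_zero_right hz
  have hfyz : f y + f z = 0 := by
    simpa [hx] using congrArg f hxyz
  have hyz : y = z := by
    refine sub_eq_zero.mp (LinearMap.disjoint_ker.mp hfg _ (sub_mem hy_range hz_range) ?_)
    rw [map_sub, hgy, hgz, sub_neg_eq_add, hfyz]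
  subst hyz
  have hy0 : y = 0 := by
    have hfy : f y = 0 := self_eq_neg.mp (hgy.symm.trans hgz)
    exact LinearMap.disjoint_ker.mp hfg _ hy_range (hgy.trans hfy)
  subst hy0
  simpa using hxyz

def consZero {n : ℕ} (ν : Fin n → ℝ) : Fin (n + 1) → ℝ := Fin.cons 0 ν

lemma Anu_eq_neg_vecMulVec {n : ℕ} (ν : Fin n → ℝ) :
    Anu ν = -(vecMulVec (e 0) (consZero ν) + vecMulVec (consZero ν) (e 0)) := by
  ext x y
  refine Fin.cases ?_ (fun i => ?_) x <;> refine Fin.cases ?_ (fun j => ?_) y <;>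
    simp [Anu, A, symOuter, e, vecMulVec_apply, Matrix.sum_apply, Pi.single_apply, consZero]

lemma Mmat_eq_vecMulVec {n : ℕ} (lam : ℝ) (ν : Fin n → ℝ) :
    Mmat lam ν = lam⁻¹ • vecMulVec (e 0) (e 0) + lam • vecMulVec (consZero ν) (consZero ν) := by
  ext x y
  refine Fin.cases ?_ (fun i => ?_) x <;> refine Fin.cases ?_ (fun j => ?_) y <;>
    simp [Mmat, symOuter, e, vecMulVec_apply, Matrix.sum_apply, Pi.single_apply, consZero,
      Finset.sum_add_distrib]
  ring

lemma Anu_mulVec_cons {n : ℕ} (ν : Fin n → ℝ) (k : ℝ) (τ : Fin n → ℝ) :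
    Anu ν *ᵥ Fin.cons k τ = Fin.cons (-(ν ⬝ᵥ τ)) (-k • ν) := by
  ext x
  refine Fin.cases ?_ (fun i => ?_) x <;>
    simp [Anu_eq_neg_vecMulVec, neg_mulVec, add_mulVec, vecMulVec_mulVec, e, consZero,
      Fin.sum_univ_succ, dotProduct]

lemma Mmat_mulVec_cons {n : ℕ} (lam : ℝ) (ν : Fin n → ℝ) (k : ℝ) (τ : Fin n → ℝ) :
    Mmat lam ν *ᵥ Fin.cons k τ = Fin.cons (lam⁻¹ * k) ((lam * (ν ⬝ᵥ τ)) • ν) := by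
  ext x
  refine Fin.cases ?_ (fun i => ?_) x <;>
    simp [Mmat_eq_vecMulVec, add_mulVec, smul_mulVec, vecMulVec_mulVec, e, consZero,
      Fin.sum_univ_succ, dotProduct]
  ring

section UnitNormal

variable {n : ℕ} {ν : Fin n → ℝ}

lemma Anu_mulVec_cons_smul (hν : ν ⬝ᵥ ν = 1) (a c : ℝ) :
    Anu ν *ᵥ Fin.cons a (c • ν) = Fin.cons (-c) (-a • ν) := by
  rw [Anu_mulVec_cons, dotProduct_smul, hν, smul_eq_mul, mul_one]

lemma cons_smul_mem_range_Anu (hν : ν ⬝ᵥ ν = 1) (a c : ℝ) :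
    Fin.cons a (c • ν) ∈ LinearMap.range (Anu ν).mulVecLin :=
  ⟨Fin.cons (-c) (-a • ν), by rw [mulVecLin_apply, Anu_mulVec_cons_smul hν, neg_neg, neg_neg]⟩

lemma exists_eq_cons_smul_of_mem_range_Anu {v : Fin (n + 1) → ℝ}
    (hv : v ∈ LinearMap.range (Anu ν).mulVecLin) : ∃ a c : ℝ, v = Fin.cons a (c • ν) := by
  obtain ⟨w, rfl⟩ := hv
  refine Fin.consCases (fun k τ => ?_) w
  exact ⟨_, _, Anu_mulVec_cons ν k τ⟩

lemma disjoint_range_Anu_ker_Mmat (hν : ν ⬝ᵥ ν = 1) {lam : ℝ} (hlam : lam ≠ 0) :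
    Disjoint (LinearMap.range (Anu ν).mulVecLin) (LinearMap.ker (Mmat lam ν).mulVecLin) := by
  refine LinearMap.disjoint_ker.mpr fun v hv hMv => ?_
  obtain ⟨a, c, rfl⟩ := exists_eq_cons_smul_of_mem_range_Anu hv
  have hν0 : ν ≠ 0 := by rintro rfl; simp at hν
  rw [mulVecLin_apply, Mmat_mulVec_cons, dotProduct_smul, hν, smul_eq_mul, mul_one] at hMv
  obtain ⟨ha, hc⟩ := Matrix.cons_eq_zero_iff.mp hMv
  have ha : a = 0 := by simpa [hlam] using ha
  have hc : c = 0 := by simpa [hlam, hν0] using hc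
  exact Matrix.cons_eq_zero_iff.mpr ⟨ha, by rw [hc, zero_smul]⟩

lemma cons_mem_ker_Anu {τ : Fin n → ℝ} (hτ : ν ⬝ᵥ τ = 0) :
    Fin.cons 0 τ ∈ LinearMap.ker (Anu ν).mulVecLin := by
  rw [LinearMap.mem_ker, mulVecLin_apply, Anu_mulVec_cons, hτ, neg_zero, zero_smul]
  exact Matrix.cons_eq_zero_iff.mpr ⟨rfl, rfl⟩

lemma cons_smul_mem_ker_Anu_sub_Mmat (hν : ν ⬝ᵥ ν = 1) {lam : ℝ} (hlam : lam ≠ 0) {a c : ℝ}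
    (h : a + lam * c = 0) :
    Fin.cons a (c • ν) ∈
      LinearMap.ker (Anu ν - Mmat lam ν).mulVecLin ⊓ LinearMap.range (Anu ν).mulVecLin := by
  refine ⟨?_, cons_smul_mem_range_Anu hν a c⟩
  have ha : a = -(lam * c) := eq_neg_of_add_eq_zero_left h
  rw [SetLike.mem_coe, LinearMap.mem_ker, mulVecLin_apply, sub_mulVec, Anu_mulVec_cons_smul hν,
    Mmat_mulVec_cons, dotProduct_smul, hν, smul_eq_mul, mul_one, ha, neg_neg, mul_neg,
    inv_mul_cancel_left₀ hlam, sub_self]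

lemma cons_smul_mem_ker_Anu_add_Mmat (hν : ν ⬝ᵥ ν = 1) {lam : ℝ} (hlam : lam ≠ 0) {a c : ℝ}
    (h : a = lam * c) :
    Fin.cons a (c • ν) ∈
      LinearMap.ker (Anu ν + Mmat lam ν).mulVecLin ⊓ LinearMap.range (Anu ν).mulVecLin := by
  refine ⟨?_, cons_smul_mem_range_Anu hν a c⟩
  rw [SetLike.mem_coe, LinearMap.mem_ker, mulVecLin_apply, add_mulVec, Anu_mulVec_cons_smul hν,
    Mmat_mulVec_cons, dotProduct_smul, hν, smul_eq_mul, mul_one, h, inv_mul_cancel_left₀ hlam]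
  ext i
  refine Fin.cases ?_ (fun j => ?_) i <;> simp

end UnitNormal

theorem stmt_15_general (n : ℕ) (ν : Fin n → ℝ) (hν : ∑ i, ν i ^ 2 = 1)
    (lam : ℝ) (hlam : 0 < lam) :
    -- the three subspaces
    let K0 : Submodule ℝ (Fin (n + 1) → ℝ) := LinearMap.ker (Anu ν).mulVecLin
    let K1 : Submodule ℝ (Fin (n + 1) → ℝ) :=
      LinearMap.ker (Anu ν - Mmat lam ν).mulVecLin ⊓ LinearMap.range (Anu ν).mulVecLin
    let K2 : Submodule ℝ (Fin (n + 1) → ℝ) :=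
      LinearMap.ker (Anu ν + Mmat lam ν).mulVecLin ⊓ LinearMap.range (Anu ν).mulVecLin
    -- independence of the three subspaces (direct sum)
    (∀ x y z : Fin (n + 1) → ℝ, x ∈ K0 → y ∈ K1 → z ∈ K2 →
        x + y + z = 0 → x = 0 ∧ y = 0 ∧ z = 0) ∧
    -- decomposition of any `κ = (k, τ)` with the explicit components
    ∀ k : ℝ, ∀ τ : Fin n → ℝ,
      let κ : Fin (n + 1) → ℝ := Fin.cons k τ
      let κ0 : Fin (n + 1) → ℝ := Fin.cons 0 (fun i => τ i - (∑ j, τ j * ν j) * ν i)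
      let κm : Fin (n + 1) → ℝ :=
        Fin.cons ((k - lam * ∑ j, τ j * ν j) / 2)
          (fun i => ((∑ j, τ j * ν j) / 2 - k / (2 * lam)) * ν i)
      let κp : Fin (n + 1) → ℝ :=
        Fin.cons ((k + lam * ∑ j, τ j * ν j) / 2)
          (fun i => ((∑ j, τ j * ν j) / 2 + k / (2 * lam)) * ν i)
      κ = κ0 + κm + κp ∧ κ0 ∈ K0 ∧ κm ∈ K1 ∧ κp ∈ K2 := by
  intro K0 K1 K2
  have hνν : ν ⬝ᵥ ν = 1 := by simpa [dotProduct, sq] using hν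
  have hlam0 : lam ≠ 0 := hlam.ne'
  refine ⟨fun x y z hx hy hz hxyz => ?_, fun k τ => ?_⟩
  · have hsub : (Anu ν - Mmat lam ν).mulVecLin = (Anu ν).mulVecLin - (Mmat lam ν).mulVecLin :=
      map_sub (mulVecBilin ℝ ℝ) _ _
    simp only [K1, K2, hsub, mulVecLin_add] at hy hz
    exact LinearMap.eq_zero_of_mem_ker_add_mem_ker_sub_add_mem_ker_add
      (disjoint_range_Anu_ker_Mmat hνν hlam0) hx hy hz hxyz
  intro κ κ0 κm κp
  refine ⟨?_, cons_mem_ker_Anu ?_, cons_smul_mem_ker_Anu_sub_Mmat hνν hlam0 ?_,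
    cons_smul_mem_ker_Anu_add_Mmat hνν hlam0 ?_⟩
  · ext i
    refine Fin.cases ?_ (fun j => ?_) i <;> simp [κ, κ0, κm, κp] <;> ring
  · change ν ⬝ᵥ (τ - (τ ⬝ᵥ ν) • ν) = 0
    rw [dotProduct_sub, dotProduct_smul, hνν, dotProduct_comm, smul_eq_mul, mul_one, sub_self]
  · field_simp; ring
  · field_simp; ring

theorem stmt_15 (n : ℕ) (hn : 1 ≤ n) (ν : Fin n → ℝ) (hν : ∑ i, ν i ^ 2 = 1)
    (lam : ℝ) (hlam : 0 < lam) :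
    -- the three subspaces
    let K0 : Submodule ℝ (Fin (n + 1) → ℝ) := LinearMap.ker (Anu ν).mulVecLin
    let K1 : Submodule ℝ (Fin (n + 1) → ℝ) :=
      LinearMap.ker (Anu ν - Mmat lam ν).mulVecLin ⊓ LinearMap.range (Anu ν).mulVecLin
    let K2 : Submodule ℝ (Fin (n + 1) → ℝ) :=
      LinearMap.ker (Anu ν + Mmat lam ν).mulVecLin ⊓ LinearMap.range (Anu ν).mulVecLin
    -- independence of the three subspaces (direct sum)
    (∀ x y z : Fin (n + 1) → ℝ, x ∈ K0 → y ∈ K1 → z ∈ K2 →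
        x + y + z = 0 → x = 0 ∧ y = 0 ∧ z = 0) ∧
    -- decomposition of any `κ = (k, τ)` with the explicit components
    ∀ k : ℝ, ∀ τ : Fin n → ℝ,
      let κ : Fin (n + 1) → ℝ := Fin.cons k τ
      let κ0 : Fin (n + 1) → ℝ := Fin.cons 0 (fun i => τ i - (∑ j, τ j * ν j) * ν i)
      let κm : Fin (n + 1) → ℝ :=
        Fin.cons ((k - lam * ∑ j, τ j * ν j) / 2)
          (fun i => ((∑ j, τ j * ν j) / 2 - k / (2 * lam)) * ν i)
      let κp : Fin (n + 1) → ℝ :=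
        Fin.cons ((k + lam * ∑ j, τ j * ν j) / 2)
          (fun i => ((∑ j, τ j * ν j) / 2 + k / (2 * lam)) * ν i)
      κ = κ0 + κm + κp ∧ κ0 ∈ K0 ∧ κm ∈ K1 ∧ κp ∈ K2 :=
  stmt_15_general n ν hν lam hlam
end
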